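/- Let p(1),...,p(A) be a probability vector with all p(a) > 0, γ = Σ a·p(a), γ(a) = (1/γ)Σ_{b≥a}p(b). Fix k ≥ 1 and define, for each vector ū = (u(1),...,u(A)) of nonnegative integers with Σu(a) = k, π_k(ū) = (k choose u(1),...,u(A))·Π γ(a)^{u(a)}, and A_{ūv̄} = 1_{v(a) ≥ u(a+1) ∀a} · (u(1) choose v(1)−u(2),...,v(A−1)−u(A), v(A)) · Π_{a=1}^A p(a)^{v(a)−u(a+1)} when Σv(a) = k (with u(A+1) := 0), and 0 otherwise. Then for every v̄ with Σv(a) = k, Σ_{ū: Σu=k} π_k(ū)·A_{ūv̄} = π_k(v̄). -/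

import Mathlib

/-!
Write `G'` for the shift of `G` (`G' a = G (a + 1)`, `G' A = 0`). The normalised tail sums
satisfy `G a = G' a + G 0 * p a`, so the binomial theorem expands
`π_k(v) = k! ∏ G a ^ v a / (v a)!` into a sum over `s ≤ v` of
`k! ∏ G' a ^ s a / (s a)! * (G 0 * p a) ^ (v a - s a) / (v a - s a)!`.
The terms with `s A ≠ 0` vanish, and the remaining `s` are exactly the shifts `ageShift u` of the
`u` with `∑ u = k` and `ageShift u ≤ v`, the first entry being recovered as `u 0 = k - ∑ s`.
Each such term is `π_k(u) A_{uv}`: the powers `G 0 ^ (v a - s a)` multiply to the factor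
`G 0 ^ u 0` of `π_k(u)`.
-/

/-- Shift of an age configuration: `shift u a = u (a+1)`, with the
convention `u (A+1) = 0`. -/
def ageShift {A : ℕ} (u : Fin A → ℕ) : Fin A → ℕ :=
  fun a => if h : (a : ℕ) + 1 < A then u ⟨(a : ℕ) + 1, h⟩ else 0

/-- The asymptotic ancestral transition probability `A_{ūv̄}` of (25). -/
noncomputable def ancestralTrans {A : ℕ} (p : Fin A → ℝ) (u v : Fin A → ℕ) : ℝ :=
  if ∀ a, ageShift u a ≤ v a then
    (Nat.multinomial Finset.univ (fun a => v a - ageShift u a) : ℝ) *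
      ∏ a, p a ^ (v a - ageShift u a)
  else 0

open Finset Nat

theorem multinomial_mul_prod_pow {ι K : Type*} [Field K] [CharZero K] (s : Finset ι)
    (f : ι → ℕ) (x : ι → K) :
    (multinomial s f : K) * ∏ i ∈ s, x i ^ f i = (∑ i ∈ s, f i)! * ∏ i ∈ s, x i ^ f i / (f i)! := by
  have hspec : (∏ i ∈ s, ((f i)! : K)) * multinomial s f = (∑ i ∈ s, f i)! := by
    exact_mod_cast multinomial_spec s f
  have hfact : (∏ i ∈ s, ((f i)! : K)) ≠ 0 :=
    prod_ne_zero_iff.mpr fun i _ => Nat.cast_ne_zero.mpr (factorial_ne_zero _)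
  rw [prod_div_distrib, ← hspec]
  field_simp

theorem add_pow_div_factorial {K : Type*} [Field K] [CharZero K] (x y : K) (m : ℕ) :
    (x + y) ^ m / m ! = ∑ j ∈ Iic m, x ^ j / j ! * (y ^ (m - j) / (m - j)!) := by
  rw [← range_succ_eq_Iic, add_pow, sum_div]
  refine sum_congr rfl fun j hj => ?_
  have hjm : j ≤ m := Nat.lt_succ_iff.mp (mem_range.mp hj)
  have hchoose : (m.choose j : K) ≠ 0 := Nat.cast_ne_zero.mpr (Nat.choose_pos hjm).ne'
  rw [← Nat.choose_mul_factorial_mul_factorial hjm]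
  push_cast
  field_simp

theorem ageShift_eq_snoc_tail {n : ℕ} (u : Fin (n + 1) → ℕ) :
    ageShift u = Fin.snoc (Fin.tail u) 0 := by
  funext a
  induction a using Fin.lastCases with
  | last => simp [ageShift]
  | cast i => simp [ageShift, Fin.tail, Fin.succ]

@[simp]
theorem ageShift_cons {n : ℕ} (x : ℕ) (t : Fin n → ℕ) :
    ageShift (Fin.cons x t : Fin (n + 1) → ℕ) = Fin.snoc t 0 := by
  rw [ageShift_eq_snoc_tail, Fin.tail_cons]

theorem head_add_sum_ageShift {n : ℕ} (u : Fin (n + 1) → ℕ) :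
    u 0 + ∑ a, ageShift u a = ∑ a, u a := by
  rw [ageShift_eq_snoc_tail, Fin.sum_snoc, add_zero, Fin.sum_univ_succ]
  rfl

theorem sum_filter_ageShift_le {M : Type*} [AddCommMonoid M] {n k : ℕ} {v : Fin (n + 1) → ℕ}
    (hv : ∑ a, v a = k) (F : (Fin (n + 1) → ℕ) → M) :
    ∑ u ∈ (Nat.antidiagonalTuple (n + 1) k).filter (fun u => ∀ a, ageShift u a ≤ v a),
        F (ageShift u) =
      ∑ s ∈ (Iic v).filter (· (Fin.last n) = 0), F s := by
  refine sum_nbij' ageShift (fun s => Fin.cons (k - ∑ a, s a) (Fin.init s)) ?_ ?_ ?_ ?_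
    fun _ _ => rfl
  · intro u hu
    refine mem_filter.mpr ⟨mem_Iic.mpr (mem_filter.mp hu).2, ?_⟩
    simp [ageShift_eq_snoc_tail]
  · intro s hs
    obtain ⟨hsv, hlast⟩ := mem_filter.mp hs
    have hsum_le : ∑ a, s a ≤ k := hv ▸ sum_le_sum fun a _ => mem_Iic.mp hsv a
    have hinit : ∑ i, Fin.init s i = ∑ a, s a := by
      rw [Fin.sum_univ_castSucc, hlast, add_zero]
      rfl
    refine mem_filter.mpr ⟨Nat.mem_antidiagonalTuple.mpr ?_, ?_⟩
    · rw [Fin.sum_cons, hinit, Nat.sub_add_cancel hsum_le]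
    · rw [ageShift_cons, ← hlast, Fin.snoc_init_self]
      exact mem_Iic.mp hsv
  · intro u hu
    rw [ageShift_eq_snoc_tail, Fin.init_snoc, ← ageShift_eq_snoc_tail,
      ← Nat.mem_antidiagonalTuple.mp (mem_filter.mp hu).1, ← head_add_sum_ageShift,
      Nat.add_sub_cancel, Fin.cons_self_tail]
  · intro s hs
    rw [ageShift_cons, ← (mem_filter.mp hs).2, Fin.snoc_init_self]

noncomputable def multinomialWeight {A : ℕ} (G : Fin A → ℝ) (u : Fin A → ℕ) : ℝ :=
  (multinomial univ u : ℝ) * ∏ a, G a ^ u a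

theorem multinomialWeight_mul_ancestralTrans {n k : ℕ} (p G : Fin (n + 1) → ℝ)
    {u v : Fin (n + 1) → ℕ} (hu : ∑ a, u a = k) (hv : ∑ a, v a = k)
    (huv : ∀ a, ageShift u a ≤ v a) :
    multinomialWeight G u * ancestralTrans p u v =
      k ! * ∏ a, ((Fin.snoc (Fin.tail G) 0 : Fin (n + 1) → ℝ) a ^ ageShift u a / (ageShift u a)! *
        ((G 0 * p a) ^ (v a - ageShift u a) / (v a - ageShift u a)!)) := by
  have hw : ∑ a, (v a - ageShift u a) = u 0 := by
    have := head_add_sum_ageShift u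
    rw [sum_tsub_distrib _ fun a _ => huv a]
    omega
  have hhead : ∏ a, G a ^ u a / (u a)! =
      G 0 ^ u 0 / (u 0)! * ∏ a, (Fin.snoc (Fin.tail G) 0 : Fin (n + 1) → ℝ) a ^ ageShift u a /
        (ageShift u a)! := by
    rw [Fin.prod_univ_succ, Fin.prod_univ_castSucc, ageShift_eq_snoc_tail]
    simp [Fin.tail]
  have hpow : G 0 ^ u 0 = ∏ a, G 0 ^ (v a - ageShift u a) := by
    rw [prod_pow_eq_pow_sum, hw]
  have hfact : ((u 0)! : ℝ) ≠ 0 := Nat.cast_ne_zero.mpr (factorial_ne_zero _)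
  rw [multinomialWeight, multinomial_mul_prod_pow, hu, ancestralTrans, if_pos huv,
    multinomial_mul_prod_pow, hw, hhead, hpow]
  simp only [mul_pow, prod_mul_distrib, prod_div_distrib]
  field_simp

theorem sum_multinomialWeight_mul_ancestralTrans {n k : ℕ} (p G : Fin (n + 1) → ℝ)
    (hG : ∀ a, G a = (Fin.snoc (Fin.tail G) 0 : Fin (n + 1) → ℝ) a + G 0 * p a)
    {v : Fin (n + 1) → ℕ} (hv : ∑ a, v a = k) :
    ∑ u ∈ Nat.antidiagonalTuple (n + 1) k, multinomialWeight G u * ancestralTrans p u v =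
      multinomialWeight G v := by
  set term : Fin (n + 1) → ℕ → ℝ := fun a j =>
    (Fin.snoc (Fin.tail G) 0 : Fin (n + 1) → ℝ) a ^ j / j ! *
      ((G 0 * p a) ^ (v a - j) / (v a - j)!)
  have hterm_last : ∀ j ≠ 0, term (Fin.last n) j = 0 := fun j hj => by
    simp [term, zero_pow hj]
  calc ∑ u ∈ Nat.antidiagonalTuple (n + 1) k, multinomialWeight G u * ancestralTrans p u v
      = ∑ u ∈ (Nat.antidiagonalTuple (n + 1) k).filter (fun u => ∀ a, ageShift u a ≤ v a),
          k ! * ∏ a, term a (ageShift u a) := by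
        rw [sum_filter]
        refine sum_congr rfl fun u hu => ?_
        split_ifs with huv
        · exact multinomialWeight_mul_ancestralTrans p G (Nat.mem_antidiagonalTuple.mp hu) hv huv
        · rw [ancestralTrans, if_neg huv, mul_zero]
    _ = ∑ s ∈ (Iic v).filter (· (Fin.last n) = 0), k ! * ∏ a, term a (s a) :=
        sum_filter_ageShift_le hv fun s => k ! * ∏ a, term a (s a)
    _ = ∑ s ∈ Iic v, k ! * ∏ a, term a (s a) :=
        sum_filter_of_ne fun s _ hs => by_contra fun hlast =>
          hs (by rw [prod_eq_zero (mem_univ (Fin.last n)) (hterm_last _ hlast), mul_zero])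
    _ = k ! * ∏ a, ∑ j ∈ Iic (v a), term a j := by
        rw [← mul_sum, prod_univ_sum]
        rfl
    _ = multinomialWeight G v := by
        simp only [term, ← add_pow_div_factorial, ← hG]
        rw [multinomialWeight, multinomial_mul_prod_pow, hv]

theorem eq_snoc_tail_add_of_eq_sum_Ici_div {n : ℕ} (p : Fin (n + 1) → ℝ) (hpsum : ∑ a, p a = 1)
    (γ : ℝ) (G : Fin (n + 1) → ℝ) (hG : ∀ a, G a = (∑ b ∈ Ici a, p b) / γ) (a : Fin (n + 1)) :
    G a = (Fin.snoc (Fin.tail G) 0 : Fin (n + 1) → ℝ) a + G 0 * p a := by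
  have hG0 : G 0 = 1 / γ := by
    rw [hG, ← bot_eq_zero, Ici_bot, hpsum]
  induction a using Fin.lastCases with
  | last =>
    rw [hG, ← Fin.top_eq_last, Ici_top, sum_singleton, Fin.top_eq_last, Fin.snoc_last, hG0]
    ring
  | cast i =>
    have hIoi : Ioi i.castSucc = Ici i.succ := by
      ext; simp [Fin.castSucc_lt_iff_succ_le]
    rw [hG, Ici_eq_cons_Ioi, sum_cons, hIoi, Fin.snoc_castSucc, Fin.tail, hG i.succ, hG0]
    ring

theorem multinomial_stationary_for_ancestral_process_general
    (A : ℕ) (p : Fin A → ℝ)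
    (hpsum : ∑ a, p a = 1)
    (γ : ℝ)
    (G : Fin A → ℝ) (hG : ∀ a, G a = (∑ b ∈ Finset.univ.filter (fun b => a ≤ b), p b) / γ)
    (k : ℕ)
    (π : (Fin A → ℕ) → ℝ)
    (hπ : ∀ u, π u = (Nat.multinomial Finset.univ u : ℝ) * ∏ a, G a ^ u a) :
    ∀ v ∈ Finset.Nat.antidiagonalTuple A k,
      ∑ u ∈ Finset.Nat.antidiagonalTuple A k, π u * ancestralTrans p u v = π v := by
  intro v hv
  obtain rfl : π = multinomialWeight G := funext hπ
  cases A with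
  | zero =>
    rw [sum_eq_single_of_mem v hv fun u _ huv => absurd (Subsingleton.elim u v) huv]
    simp [ancestralTrans]
  | succ n =>
    simp only [filter_le_eq_Ici] at hG
    exact sum_multinomialWeight_mul_ancestralTrans p G
      (eq_snoc_tail_add_of_eq_sum_Ici_div p hpsum γ G hG) (Nat.mem_antidiagonalTuple.mp hv)

theorem multinomial_stationary_for_ancestral_process
    (A : ℕ) (hA : 1 ≤ A) (p : Fin A → ℝ)
    (hp : ∀ a, 0 < p a) (hpsum : ∑ a, p a = 1)
    (γ : ℝ) (hγ : γ = ∑ a : Fin A, (((a : ℕ) : ℝ) + 1) * p a)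
    (G : Fin A → ℝ) (hG : ∀ a, G a = (∑ b ∈ Finset.univ.filter (fun b => a ≤ b), p b) / γ)
    (k : ℕ) (hk : 1 ≤ k)
    (π : (Fin A → ℕ) → ℝ)
    (hπ : ∀ u, π u = (Nat.multinomial Finset.univ u : ℝ) * ∏ a, G a ^ u a) :
    ∀ v ∈ Finset.Nat.antidiagonalTuple A k,
      ∑ u ∈ Finset.Nat.antidiagonalTuple A k, π u * ancestralTrans p u v = π v :=
  multinomial_stationary_for_ancestral_process_general A p hpsum γ G hG k π hπ
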